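/- Fix integers K̲, K̄ with 1 ≤ K̲ ≤ K̄ ≤ T−1, and suppose that for every k with K̲ ≤ k ≤ K̄ one has ∑_{t=1}^{T−k} ∑_{i=1}^N (Δ_k x̃_{it})² > 0. Let β̂_k^FD be the β-component of any minimizer of the k-period FD least-squares objective and ω̂_k^FD = [∑_{t=1}^{T−k} ∑_{i=1}^N (Δ_k x̃_{it})²] / [∑_{k'=1}^{T−1} ∑_{t'=1}^{T−k'} ∑_{i=1}^N (Δ_{k'} x̃_{it'})²]. Then the restricted-gap generalized TWFE estimator satisfies [∑_{k=K̲}^{K̄} ω̂_k^FD β̂_k^FD] / [∑_{k=K̲}^{K̄} ω̂_k^FD] = [∑_{k=K̲}^{K̄} ∑_{t=1}^{T−k} ∑_{i=1}^N Δ_k ỹ_{it} Δ_k x̃_{it}] / [∑_{k=K̲}^{K̄} ∑_{t=1}^{T−k} ∑_{i=1}^N (Δ_k x̃_{it})²]. -/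

import Mathlib

open Finset

private lemma quad_zero (A B : ℝ) (hB : 0 ≤ B)
    (h : ∀ s : ℝ, 0 ≤ s ^ 2 * B - 2 * s * A) : A = 0 := by
  rcases eq_or_lt_of_le hB with hB0 | hB0
  · have h1 := h A
    rw [← hB0] at h1
    nlinarith [sq_nonneg A]
  · have h1 := h (A / B)
    have e : (A / B) ^ 2 * B - 2 * (A / B) * A = -(A ^ 2) / B := by
      field_simp; ring
    rw [e, neg_div] at h1
    have h2 : A ^ 2 = (A ^ 2 / B) * B := by field_simp
    have h3 : A ^ 2 / B * B ≤ 0 * B :=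
      mul_le_mul_of_nonneg_right (by linarith) hB
    have h4 : A ^ 2 = 0 := le_antisymm (by linarith) (sq_nonneg A)
    exact pow_eq_zero_iff (by norm_num) |>.mp h4

private lemma key (N m : ℕ) (hN : 1 ≤ N) (β : ℝ) (Y X : ℕ → ℕ → ℝ) (γ : ℕ → ℝ)
    (hmin : ∀ (β' : ℝ) (γ' : ℕ → ℝ),
      ∑ i ∈ range N, ∑ t ∈ range m, (Y i t - β * X i t - γ t) ^ 2 ≤
      ∑ i ∈ range N, ∑ t ∈ range m, (Y i t - β' * X i t - γ' t) ^ 2) :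
    β * ∑ t ∈ range m, ∑ i ∈ range N,
        (X i t - (1 / (N:ℝ)) * ∑ j ∈ range N, X j t) ^ 2
      = ∑ t ∈ range m, ∑ i ∈ range N,
        (Y i t - (1 / (N:ℝ)) * ∑ j ∈ range N, Y j t) *
          (X i t - (1 / (N:ℝ)) * ∑ j ∈ range N, X j t) := by
  have hNR : (N:ℝ) ≠ 0 := Nat.cast_ne_zero.mpr (by omega)
  -- sum of demeaned x is zero
  have hcsum : ∀ t, ∑ i ∈ range N,
      (X i t - (1 / (N:ℝ)) * ∑ j ∈ range N, X j t) = 0 := by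
    intro t
    rw [sum_sub_distrib, sum_const, card_range, nsmul_eq_mul]
    field_simp
    ring
  -- first order condition in β (with γ adjusted)
  have foc : ∑ i ∈ range N, ∑ t ∈ range m,
      (Y i t - β * X i t - γ t) *
        (X i t - (1 / (N:ℝ)) * ∑ j ∈ range N, X j t) = 0 := by
    apply quad_zero _ (∑ i ∈ range N, ∑ t ∈ range m,
      (X i t - (1 / (N:ℝ)) * ∑ j ∈ range N, X j t) ^ 2) (by positivity)
    intro s
    have h := hmin (β + s) (fun t => γ t - s * ((1 / (N:ℝ)) * ∑ j ∈ range N, X j t))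
    have e1 : ∑ i ∈ range N, ∑ t ∈ range m,
        (Y i t - (β + s) * X i t -
          (γ t - s * ((1 / (N:ℝ)) * ∑ j ∈ range N, X j t))) ^ 2
        = ∑ i ∈ range N, ∑ t ∈ range m,
          ((Y i t - β * X i t - γ t) ^ 2
            + (s ^ 2 * (X i t - (1 / (N:ℝ)) * ∑ j ∈ range N, X j t) ^ 2
              - 2 * s * ((Y i t - β * X i t - γ t) *
                  (X i t - (1 / (N:ℝ)) * ∑ j ∈ range N, X j t)))) :=
      sum_congr rfl fun i _ => sum_congr rfl fun t _ => by ring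
    rw [e1] at h
    simp only [sum_add_distrib, sum_sub_distrib, ← mul_sum] at h
    linarith
  -- rewrite the FOC sum
  have e2 : ∀ t, ∑ i ∈ range N,
      (Y i t - β * X i t - γ t) *
        (X i t - (1 / (N:ℝ)) * ∑ j ∈ range N, X j t)
      = (∑ i ∈ range N, (Y i t - (1 / (N:ℝ)) * ∑ j ∈ range N, Y j t) *
          (X i t - (1 / (N:ℝ)) * ∑ j ∈ range N, X j t))
        - β * ∑ i ∈ range N,
            (X i t - (1 / (N:ℝ)) * ∑ j ∈ range N, X j t) ^ 2 := by
    intro t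
    have e3 : ∀ i ∈ range N, (Y i t - β * X i t - γ t) *
        (X i t - (1 / (N:ℝ)) * ∑ j ∈ range N, X j t)
        = ((Y i t - (1 / (N:ℝ)) * ∑ j ∈ range N, Y j t) *
            (X i t - (1 / (N:ℝ)) * ∑ j ∈ range N, X j t)
          - β * (X i t - (1 / (N:ℝ)) * ∑ j ∈ range N, X j t) ^ 2)
          + ((1 / (N:ℝ)) * ∑ j ∈ range N, Y j t
              - β * ((1 / (N:ℝ)) * ∑ j ∈ range N, X j t) - γ t) *
            (X i t - (1 / (N:ℝ)) * ∑ j ∈ range N, X j t) :=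
      fun i _ => by ring
    rw [sum_congr rfl e3, sum_add_distrib, sum_sub_distrib, ← mul_sum, ← mul_sum,
      hcsum t, mul_zero, add_zero]
  rw [sum_comm] at foc
  rw [sum_congr rfl fun t _ => e2 t, sum_sub_distrib, ← mul_sum] at foc
  linarith

/-- The restricted-gap generalized TWFE estimator: if each `β̂_k^FD` (for `K̲ ≤ k ≤ K̄`) is
the β-component of a minimizer of the k-period FD least-squares objective, then
`[∑_{k=K̲}^{K̄} ω̂_k^FD β̂_k^FD] / [∑_{k=K̲}^{K̄} ω̂_k^FD]
  = [∑_{k=K̲}^{K̄} ∑_t ∑_i Δ_k ỹ_it Δ_k x̃_it] / [∑_{k=K̲}^{K̄} ∑_t ∑_i (Δ_k x̃_it)²]`.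
Periods are indexed `0, …, T−1`. -/
theorem restricted_gap_twfe (N T Klo Khi : ℕ) (hN : 1 ≤ N) (hT : 2 ≤ T)
    (hK1 : 1 ≤ Klo) (hK2 : Klo ≤ Khi) (hK3 : Khi ≤ T - 1)
    (y x ty tx : ℕ → ℕ → ℝ)
    (hty : ∀ i t, ty i t = y i t - (1 / (N : ℝ)) * ∑ j ∈ range N, y j t)
    (htx : ∀ i t, tx i t = x i t - (1 / (N : ℝ)) * ∑ j ∈ range N, x j t)
    (hpos : ∀ k ∈ Icc Klo Khi,
      0 < ∑ t ∈ range (T - k), ∑ i ∈ range N, (tx i (t + k) - tx i t) ^ 2)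
    (βFD ωFD : ℕ → ℝ)
    (hβFD : ∀ k ∈ Icc Klo Khi, ∃ γ : ℕ → ℝ, ∀ (β' : ℝ) (γ' : ℕ → ℝ),
      ∑ i ∈ range N, ∑ t ∈ range (T - k),
          ((y i (t + k) - y i t) - βFD k * (x i (t + k) - x i t) - γ t) ^ 2 ≤
        ∑ i ∈ range N, ∑ t ∈ range (T - k),
          ((y i (t + k) - y i t) - β' * (x i (t + k) - x i t) - γ' t) ^ 2)
    (hωFD : ∀ k, ωFD k =
      (∑ t ∈ range (T - k), ∑ i ∈ range N, (tx i (t + k) - tx i t) ^ 2) /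
      (∑ k' ∈ Icc 1 (T - 1), ∑ t' ∈ range (T - k'), ∑ i ∈ range N,
        (tx i (t' + k') - tx i t') ^ 2)) :
    (∑ k ∈ Icc Klo Khi, ωFD k * βFD k) / (∑ k ∈ Icc Klo Khi, ωFD k) =
      (∑ k ∈ Icc Klo Khi, ∑ t ∈ range (T - k), ∑ i ∈ range N,
        (ty i (t + k) - ty i t) * (tx i (t + k) - tx i t)) /
      (∑ k ∈ Icc Klo Khi, ∑ t ∈ range (T - k), ∑ i ∈ range N,
        (tx i (t + k) - tx i t) ^ 2) := by
  set B : ℕ → ℝ := fun k => ∑ t ∈ range (T - k), ∑ i ∈ range N,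
    (tx i (t + k) - tx i t) ^ 2 with hB
  set A : ℕ → ℝ := fun k => ∑ t ∈ range (T - k), ∑ i ∈ range N,
    (ty i (t + k) - ty i t) * (tx i (t + k) - tx i t) with hA
  set D : ℝ := ∑ k' ∈ Icc 1 (T - 1), B k' with hD
  have hDpos : 0 < D := by
    apply sum_pos' (fun k _ => by positivity)
    exact ⟨Klo, mem_Icc.mpr ⟨hK1, le_trans hK2 hK3⟩, hpos Klo (mem_Icc.mpr ⟨le_refl _, hK2⟩)⟩
  have htX : ∀ i t k, tx i (t + k) - tx i t
      = (x i (t + k) - x i t) - (1 / (N:ℝ)) * ∑ j ∈ range N, (x j (t + k) - x j t) := by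
    intro i t k; rw [htx, htx, sum_sub_distrib]; ring
  have htY : ∀ i t k, ty i (t + k) - ty i t
      = (y i (t + k) - y i t) - (1 / (N:ℝ)) * ∑ j ∈ range N, (y j (t + k) - y j t) := by
    intro i t k; rw [hty, hty, sum_sub_distrib]; ring
  have hnorm : ∀ k ∈ Icc Klo Khi, βFD k * B k = A k := by
    intro k hk
    obtain ⟨γ, hmin⟩ := hβFD k hk
    have h := key N (T - k) hN (βFD k) (fun i t => y i (t + k) - y i t)
      (fun i t => x i (t + k) - x i t) γ hmin
    simp only [← htX, ← htY] at h
    exact h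
  have hω : ∀ k, ωFD k = B k / D := fun k => hωFD k
  have hnum : ∑ k ∈ Icc Klo Khi, ωFD k * βFD k = (∑ k ∈ Icc Klo Khi, A k) / D := by
    rw [sum_div]
    refine sum_congr rfl fun k hk => ?_
    rw [hω k, div_mul_eq_mul_div, mul_comm (B k), hnorm k hk]
  have hden : ∑ k ∈ Icc Klo Khi, ωFD k = (∑ k ∈ Icc Klo Khi, B k) / D := by
    rw [sum_div]; exact sum_congr rfl fun k _ => hω k
  rw [hnum, hden, div_div_div_eq, mul_comm (∑ k ∈ Icc Klo Khi, A k) D,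
    mul_div_mul_left _ _ hDpos.ne']
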